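/- Let n ≥ 1, d ≥ 1, let s ≥ 2 be an integer, and let C ≥ 1 be a constant such that every real polynomial p in one variable with deg p ≤ d and |p(x)| ≤ 1 for all x ∈ G¹_s satisfies |p(x)| ≤ C for all x ∈ [−1,1]. Then every real polynomial P in n variables of total degree ≤ d with |P(z)| ≤ 1 for all z in the grid G^n_s = (G¹_s)^n satisfies |P(x)| ≤ C^n for all x ∈ [−1,1]^n. -/
import Mathlib


open Polynomial MeasureTheory Set

/-- `R_d(G^n_s) ≤ [R_d(G¹_s)]^n`: if every one-variable polynomial of degree at most `d`
bounded by `1` on the regular grid `G¹_s` is bounded by `C` on `[−1,1]`, then every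
`n`-variable polynomial of total degree at most `d` bounded by `1` on the grid
`G^n_s = (G¹_s)^n` is bounded by `C^n` on `[−1,1]^n`. -/
theorem remez_grid_power (n : ℕ) (hn : 1 ≤ n) (d s : ℕ) (hd : 1 ≤ d) (hs : 2 ≤ s)
    (C : ℝ) (hC : 1 ≤ C)
    (h1 : ∀ p : Polynomial ℝ, p.natDegree ≤ d →
      (∀ x ∈ {x : ℝ | ∃ k : ℕ, k < s ∧ x = -1 + 2 * (k : ℝ) / ((s : ℝ) - 1)},
        |p.eval x| ≤ 1) →
      ∀ x ∈ Icc (-1 : ℝ) 1, |p.eval x| ≤ C) :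
    ∀ P : MvPolynomial (Fin n) ℝ, P.totalDegree ≤ d →
      (∀ z : Fin n → ℝ,
        (∀ i, z i ∈ {x : ℝ | ∃ k : ℕ, k < s ∧ x = -1 + 2 * (k : ℝ) / ((s : ℝ) - 1)}) →
        |MvPolynomial.eval z P| ≤ 1) →
      ∀ x : Fin n → ℝ, (∀ i, x i ∈ Icc (-1 : ℝ) 1) → |MvPolynomial.eval x P| ≤ C ^ n := by
  intro P hdeg hgrid x hx
  set G : Set ℝ := {x : ℝ | ∃ k : ℕ, k < s ∧ x = -1 + 2 * (k : ℝ) / ((s : ℝ) - 1)} with hG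
  have hCpos : (0 : ℝ) < C := lt_of_lt_of_le one_pos hC
  -- main claim by induction on k
  have key : ∀ k : ℕ, k ≤ n → ∀ z : Fin n → ℝ,
      (∀ i : Fin n, (i : ℕ) < k → z i ∈ Icc (-1 : ℝ) 1) →
      (∀ i : Fin n, k ≤ (i : ℕ) → z i ∈ G) →
      |MvPolynomial.eval z P| ≤ C ^ k := by
    intro k
    induction k with
    | zero =>
      intro _ z _ hg
      simpa using hgrid z (fun i => hg i (Nat.zero_le _))
    | succ k ih =>
      intro hk z hcube hg
      have hkn : k < n := lt_of_lt_of_le (Nat.lt_succ_self k) hk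
      set j : Fin n := ⟨k, hkn⟩ with hj
      -- one-variable polynomial: substitute X for variable j
      set g : Fin n → Polynomial ℝ := fun i => if i = j then Polynomial.X else Polynomial.C (z i)
        with hgdef
      set p : Polynomial ℝ := MvPolynomial.aeval g P with hp
      have hgdeg : ∀ i, (g i).natDegree ≤ 1 := by
        intro i
        by_cases h : i = j <;> simp [hgdef, h]
      have hpd : p.natDegree ≤ d := by
        calc p.natDegree ≤ d * 1 := MvPolynomial.aeval_natDegree_le P hdeg g hgdeg
        _ = d := mul_one d
      have heval : ∀ t : ℝ, p.eval t = MvPolynomial.eval (Function.update z j t) P := by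
        intro t
        rw [hp]
        have : (Polynomial.evalRingHom t).comp
              ((MvPolynomial.aeval g : MvPolynomial (Fin n) ℝ →ₐ[ℝ] Polynomial ℝ) :
                MvPolynomial (Fin n) ℝ →+* Polynomial ℝ)
            = (MvPolynomial.eval (Function.update z j t)) := by
          apply MvPolynomial.ringHom_ext
          · intro r; simp
          · intro i
            by_cases h : i = j <;> simp [hgdef, h, Function.update]
        exact congrFun (congrArg (fun f => f.toFun) this) P
      -- p is bounded by C^k on the grid
      have hpg : ∀ t ∈ G, |p.eval t| ≤ C ^ k := by
        intro t ht
        rw [heval]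
        apply ih (le_of_lt hkn) _
        · intro i hi
          rw [Function.update_apply]
          have hij : i ≠ j := by
            intro h; rw [h] at hi; exact lt_irrefl _ hi
          rw [if_neg hij]
          exact hcube i (lt_trans hi (Nat.lt_succ_self k))
        · intro i hi
          rw [Function.update_apply]
          by_cases h : i = j
          · rw [if_pos h]; exact ht
          · rw [if_neg h]
            apply hg i
            rcases Nat.lt_or_ge (i : ℕ) (k+1) with h' | h'
            · exfalso
              apply h
              apply Fin.ext
              exact Nat.le_antisymm (Nat.lt_succ_iff.mp h') hi
            · exact h'
      -- scale and apply h1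
      have hCk : (0 : ℝ) < C ^ k := pow_pos hCpos k
      have hq : ∀ t ∈ Icc (-1 : ℝ) 1, |p.eval t| ≤ C ^ (k + 1) := by
        intro t ht
        have := h1 (Polynomial.C (C ^ k)⁻¹ * p)
          (le_trans (Polynomial.natDegree_C_mul_le _ _) hpd)
          (by
            intro y hy
            rw [Polynomial.eval_mul, Polynomial.eval_C, abs_mul, abs_inv, abs_of_pos hCk]
            rw [inv_mul_le_iff₀ hCk, mul_one]
            exact hpg y hy) t ht
        rw [Polynomial.eval_mul, Polynomial.eval_C, abs_mul, abs_inv, abs_of_pos hCk,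
          inv_mul_le_iff₀ hCk] at this
        calc |p.eval t| ≤ C ^ k * C := this
        _ = C ^ (k + 1) := (pow_succ C k).symm
      have hzj : z j ∈ Icc (-1 : ℝ) 1 := hcube j (Nat.lt_succ_self k)
      have := hq (z j) hzj
      rwa [heval, Function.update_eq_self] at this
  have := key n le_rfl x (fun i _ => hx i) (fun i hi => absurd hi (not_le.mpr i.isLt))
  exact this
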